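/- An elevator Büchi automaton (one with no nondeterministic accepting SCCs, i.e., every accepting SCC is either inherently weak or deterministic) can be complemented into an automaton whose language is the complement, with at most exponentially many states: there exists an automaton B with at most 2^{O(|Q|)} states (e.g., states being tuples of subsets of Q) such that L(B) = Σ^ω \ L(A). In particular, for an automaton A whose every accepting SCC is inherently weak, the Miyano–Hayashi construction gives a complement with at most 3^{|Q|} states. -/
import Mathlib


/-- A (transition-based) Büchi automaton over alphabet `A` with states `Q`:
transition relation `δ`, initial states `I`, accepting transitions `F`. -/
structure BA (Q A : Type) where
  δ : Set (Q × A × Q)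
  I : Set Q
  F : Set (Q × A × Q)

variable {Q A : Type}

/-- `ρ` is a run of `M` on the infinite word `w` (starting at `ρ 0`). -/
def BA.IsRun (M : BA Q A) (w : ℕ → A) (ρ : ℕ → Q) : Prop :=
  ∀ i, (ρ i, w i, ρ (i + 1)) ∈ M.δ

/-- The run `ρ` takes accepting transitions infinitely often. -/
def BA.InfAcc (M : BA Q A) (w : ℕ → A) (ρ : ℕ → Q) : Prop :=
  ∀ N, ∃ i ≥ N, (ρ i, w i, ρ (i + 1)) ∈ M.F

/-- The ω-language of the Büchi automaton `M`. -/
def BA.Lang (M : BA Q A) : Set (ℕ → A) :=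
  {w | ∃ ρ : ℕ → Q, ρ 0 ∈ M.I ∧ M.IsRun w ρ ∧ M.InfAcc w ρ}

/-- One-step successor relation of `M`. -/
def BA.Step (M : BA Q A) (q r : Q) : Prop := ∃ a, (q, a, r) ∈ M.δ

/-- Reachability along transitions of `M`. -/
def BA.Reach (M : BA Q A) : Q → Q → Prop := Relation.ReflTransGen M.Step

/-- Mutual reachability. -/
def BA.SameSCC (M : BA Q A) (q r : Q) : Prop := M.Reach q r ∧ M.Reach r q

/-- `C` is a strongly connected component of `M` (an equivalence class of
mutual reachability). -/
def BA.IsSCC (M : BA Q A) (C : Set Q) : Prop := ∃ q : Q, C = {r | M.SameSCC q r}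

/-- `C` is accepting: it contains an accepting transition with both endpoints in `C`. -/
def BA.AccSCC (M : BA Q A) (C : Set Q) : Prop :=
  ∃ t : Q × A × Q, t ∈ M.F ∧ t ∈ M.δ ∧ t.1 ∈ C ∧ t.2.2 ∈ C

/-- A cycle within `C`: a nonempty closed finite path of transitions all of whose
states lie in `C`. -/
def BA.IsCycleIn (M : BA Q A) (C : Set Q) (n : ℕ) (σ : ℕ → Q) (a : ℕ → A) : Prop :=
  0 < n ∧ σ 0 = σ n ∧ ∀ j < n, σ j ∈ C ∧ (σ j, a j, σ (j + 1)) ∈ M.δ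

/-- `C` is inherently weak accepting: every cycle within `C` contains an accepting
transition. -/
def BA.IWA (M : BA Q A) (C : Set Q) : Prop :=
  ∀ n σ a, M.IsCycleIn C n σ a → ∃ j < n, (σ j, a j, σ (j + 1)) ∈ M.F

/-- `C` is inherently weak rejecting: no cycle within `C` contains an accepting
transition. -/
def BA.IWR (M : BA Q A) (C : Set Q) : Prop :=
  ∀ n σ a, M.IsCycleIn C n σ a → ∀ j < n, (σ j, a j, σ (j + 1)) ∉ M.F

/-- Successors of a set of states over a letter. -/
def BA.post (M : BA Q A) (S : Set Q) (a : A) : Set Q := {r | ∃ q ∈ S, (q, a, r) ∈ M.δ}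

/-- The subset-construction run `S₀ = I`, `S_{i+1} = δ(S_i, w i)`. -/
def BA.subsetRun (M : BA Q A) (w : ℕ → A) : ℕ → Set Q
  | 0 => M.I
  | i + 1 => M.post (M.subsetRun w i) (w i)

/-- `C` is a deterministic SCC: the restriction of `δ` to `C` is deterministic. -/
def BA.DetSCC (M : BA Q A) (C : Set Q) : Prop :=
  ∀ q ∈ C, ∀ (a : A) (r r' : Q),
    (q, a, r) ∈ M.δ → r ∈ C → (q, a, r') ∈ M.δ → r' ∈ C → r = r'

namespace BA

/-- E-successors of a set of states. -/
def postR (M : BA Q A) (E : Set (Q × A × Q)) (S : Set Q) (a : A) : Set Q :=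
  {r | ∃ q ∈ S, (q, a, r) ∈ E}

/-- The SCC class of a state. -/
def cls (M : BA Q A) (q : Q) : Set Q := {r | M.SameSCC q r}

variable {M : BA Q A} {w : ℕ → A}

lemma sameSCC_refl (q : Q) : M.SameSCC q q := ⟨.refl, .refl⟩
lemma sameSCC_symm {q r : Q} (h : M.SameSCC q r) : M.SameSCC r q := ⟨h.2, h.1⟩
lemma sameSCC_trans {q r s : Q} (h : M.SameSCC q r) (h' : M.SameSCC r s) :
    M.SameSCC q s := ⟨h.1.trans h'.1, h'.2.trans h.2⟩

lemma cls_eq_of_sameSCC {q r : Q} (h : M.SameSCC q r) : M.cls q = M.cls r := by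
  ext s; exact ⟨fun hs => sameSCC_trans (sameSCC_symm h) hs, fun hs => sameSCC_trans h hs⟩

lemma mem_cls_self (q : Q) : q ∈ M.cls q := sameSCC_refl q


lemma isRun_reach {ρ : ℕ → Q} (hρ : M.IsRun w ρ) : ∀ i j, i ≤ j → M.Reach (ρ i) (ρ j) := by
  intro i j hij
  induction j with
  | zero =>
    obtain rfl : i = 0 := by omega
    exact .refl
  | succ j ih =>
    rcases Nat.lt_or_ge i (j+1) with h | h
    · exact (ih (by omega)).tail ⟨w j, hρ j⟩
    · obtain rfl : i = j + 1 := by omega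
      exact .refl

lemma mem_subsetRun_of_run {ρ : ℕ → Q} (h0 : ρ 0 ∈ M.I) (hρ : M.IsRun w ρ) :
    ∀ t, ρ t ∈ M.subsetRun w t := by
  intro t
  induction t with
  | zero => exact h0
  | succ t ih => exact ⟨ρ t, ih, hρ t⟩

lemma exists_prefix {T : ℕ} {q : Q} (h : q ∈ M.subsetRun w T) :
    ∃ ρ : ℕ → Q, ρ 0 ∈ M.I ∧ (∀ t < T, (ρ t, w t, ρ (t + 1)) ∈ M.δ) ∧ ρ T = q := by
  induction T generalizing q with
  | zero => exact ⟨fun _ => q, h, fun t ht => absurd ht (by omega), rfl⟩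
  | succ T ih =>
    obtain ⟨p, hp, hstep⟩ := h
    obtain ⟨ρ, h0, hs, hT⟩ := ih hp
    refine ⟨fun t => if t ≤ T then ρ t else q, by simpa using h0, ?_, by simp⟩
    intro t ht
    rcases Nat.lt_or_ge t T with h' | h'
    · simpa [show t ≤ T by omega, show t + 1 ≤ T by omega] using hs t h'
    · obtain rfl : t = T := by omega
      simpa [hT, show ¬ (t + 1 ≤ t) by omega] using hstep

section Koenig
variable [Finite Q]

/-- a chain of length `n` starting at `q` at time `t`. -/
private def Chain (T : ℕ → Set Q) (R : ℕ → Q → Q → Prop) (t : ℕ) (q : Q) (n : ℕ) : Prop :=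
  ∃ σ : ℕ → Q, σ 0 = q ∧ (∀ k ≤ n, σ k ∈ T (t + k)) ∧ ∀ k < n, R (t + k) (σ k) (σ (k + 1))

private lemma chain_mono {T R t q} {m n : ℕ} (h : Chain (Q := Q) T R t q n) (hmn : m ≤ n) :
    Chain T R t q m := by
  obtain ⟨σ, h0, hT, hR⟩ := h
  exact ⟨σ, h0, fun k hk => hT k (hk.trans hmn), fun k hk => hR k (by omega)⟩

private lemma chain_back {T : ℕ → Set Q} {R : ℕ → Q → Q → Prop}
    (hpred : ∀ t q, q ∈ T (t + 1) → ∃ p ∈ T t, R t p q) (t : ℕ) :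
    ∀ n, ∀ q ∈ T (t + n), ∃ p, ∃ σ : ℕ → Q, σ 0 = p ∧ σ n = q ∧ (∀ k ≤ n, σ k ∈ T (t + k)) ∧
      ∀ k < n, R (t + k) (σ k) (σ (k + 1)) := by
  intro n
  induction n with
  | zero =>
    intro q hq
    refine ⟨q, fun _ => q, rfl, rfl, fun k hk => ?_, fun k hk => by omega⟩
    obtain rfl : k = 0 := by omega
    exact hq
  | succ n ih =>
    intro q hq
    obtain ⟨p, hp, hR⟩ := hpred (t + n) q (by rw [Nat.add_assoc]; exact hq)
    obtain ⟨p0, σ, h0, hend, hT, hRs⟩ := ih p hp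
    refine ⟨p0, fun k => if k ≤ n then σ k else q, by simpa using h0, by
        simp [show ¬ (n + 1 ≤ n) by omega], ?_, ?_⟩
    · intro k hk
      rcases Nat.lt_or_ge k (n+1) with h' | h'
      · simpa [show k ≤ n by omega] using hT k (by omega)
      · obtain rfl : k = n + 1 := by omega
        simpa [show ¬ (n + 1 ≤ n) by omega] using hq
    · intro k hk
      rcases Nat.lt_or_ge k n with h' | h'
      · simpa [show k ≤ n by omega, show k + 1 ≤ n by omega] using hRs k h'
      · have hkn : k = n := by omega
        simp only [hkn, if_pos (le_refl n), if_neg (show ¬ (n + 1 ≤ n) by omega)]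
        rw [hend]
        exact hR

private lemma chain_all {T : ℕ → Set Q} {R : ℕ → Q → Q → Prop}
    (hne : ∀ t, (T t).Nonempty) (hpred : ∀ t q, q ∈ T (t + 1) → ∃ p ∈ T t, R t p q) (t : ℕ) :
    ∃ q, ∀ n, Chain T R t q n := by
  have hex : ∀ n : ℕ, ∃ q, Chain T R t q n := by
    intro n
    obtain ⟨q, hq⟩ := hne (t + n)
    obtain ⟨p, σ, h0, _, hT, hR⟩ := chain_back hpred t n q hq
    exact ⟨p, σ, h0, hT, hR⟩
  classical
  choose f hf using hex
  obtain ⟨q, hq⟩ := Finite.exists_infinite_fiber f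
  replace hq := Set.infinite_coe_iff.mp hq
  refine ⟨q, fun n => ?_⟩
  obtain ⟨m, hm, hmn⟩ := hq.exists_gt n
  have : f m = q := hm
  exact this ▸ chain_mono (hf m) (by omega)

private lemma chain_step {T : ℕ → Set Q} {R : ℕ → Q → Q → Prop} {t : ℕ} {q : Q}
    (h : ∀ n, Chain T R t q n) : ∃ r, R t q r ∧ ∀ n, Chain T R (t + 1) r n := by
  classical
  have hex : ∀ n : ℕ, ∃ r, R t q r ∧ Chain T R (t + 1) r n := by
    intro n
    obtain ⟨σ, h0, hT, hR⟩ := h (n + 1)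
    refine ⟨σ 1, h0 ▸ hR 0 (by omega), fun k => σ (k + 1), rfl, ?_, ?_⟩
    · intro k hk
      rw [show t + 1 + k = t + (k + 1) by omega]
      exact hT (k + 1) (by omega)
    · intro k hk
      rw [show t + 1 + k = t + (k + 1) by omega]
      exact hR (k + 1) (by omega)
  choose f hf1 hf2 using hex
  obtain ⟨r, hr⟩ := Finite.exists_infinite_fiber f
  replace hr := Set.infinite_coe_iff.mp hr
  refine ⟨r, ?_, fun n => ?_⟩
  · obtain ⟨m, hm, _⟩ := hr.exists_gt 0
    exact hm ▸ hf1 m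
  · obtain ⟨m, hm, hmn⟩ := hr.exists_gt n
    have : f m = r := hm
    exact this ▸ chain_mono (hf2 m) (by omega)

/-- König's lemma in the form we need. -/
lemma koenig {T : ℕ → Set Q} {R : ℕ → Q → Q → Prop}
    (hne : ∀ t, (T t).Nonempty) (hpred : ∀ t q, q ∈ T (t + 1) → ∃ p ∈ T t, R t p q) :
    ∃ σ : ℕ → Q, (∀ t, σ t ∈ T t) ∧ ∀ t, R t (σ t) (σ (t + 1)) := by
  classical
  obtain ⟨q0, hq0⟩ := chain_all hne hpred 0
  let step : ∀ t : ℕ, {q : Q // ∀ n, Chain T R t q n} → {q : Q // ∀ n, Chain T R (t+1) q n} :=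
    fun t p => ⟨Classical.choose (chain_step p.2), (Classical.choose_spec (chain_step p.2)).2⟩
  let seq : ∀ t : ℕ, {q : Q // ∀ n, Chain T R t q n} :=
    fun t => Nat.rec ⟨q0, hq0⟩ step t
  have hseq : ∀ t, seq (t + 1) = step t (seq t) := fun t => rfl
  refine ⟨fun t => (seq t).1, fun t => ?_, fun t => ?_⟩
  · obtain ⟨σ, h0, hT, _⟩ := (seq t).2 0
    simpa [h0] using hT 0 (by omega)
  · exact (Classical.choose_spec (chain_step (seq t).2)).1

end Koenig

section Main
variable [Finite Q] {M : BA Q A} {w : ℕ → A} {ρ : ℕ → Q}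

/-- Every infinite run in a finite automaton is eventually inside one SCC,
and every eventual state recurs. -/
lemma limit_scc (hρ : M.IsRun w ρ) :
    ∃ N : ℕ, (∀ t, N ≤ t → M.SameSCC (ρ N) (ρ t)) ∧
      ∀ t, N ≤ t → ∃ s, t < s ∧ ρ s = ρ t := by
  classical
  set V : Set Q := {q | (ρ ⁻¹' {q}).Infinite} with hV
  have hfin : {t : ℕ | ρ t ∉ V}.Finite := by
    have : {t : ℕ | ρ t ∉ V} ⊆ ⋃ q ∈ (Vᶜ : Set Q), ρ ⁻¹' {q} := by
      intro t ht
      exact Set.mem_biUnion ht rfl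
    refine Set.Finite.subset (Set.Finite.biUnion (Set.toFinite _) ?_) this
    intro q hq
    exact Set.not_infinite.mp hq
  obtain ⟨N0, hN0⟩ := hfin.bddAbove
  set N := N0 + 1 with hN
  have hmem : ∀ t, N ≤ t → ρ t ∈ V := by
    intro t ht
    by_contra h
    have := hN0 (Set.mem_setOf.mpr h)
    omega
  have hrec : ∀ t, N ≤ t → ∃ s, t < s ∧ ρ s = ρ t := by
    intro t ht
    obtain ⟨s, hs, hst⟩ := (hmem t ht).exists_gt t
    exact ⟨s, hst, hs⟩
  refine ⟨N, fun t ht => ?_, hrec⟩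
  constructor
  · exact isRun_reach hρ N t ht
  · obtain ⟨s, hsmem, hlt⟩ := (hmem N le_rfl).exists_gt t
    have h2 := isRun_reach hρ t s (by omega)
    have h3 : ρ s = ρ N := hsmem
    rwa [h3] at h2

/-- A run which eventually only takes transitions internal to an inherently weak
accepting SCC takes accepting transitions infinitely often. -/
lemma trapped_infAcc {N : ℕ} (hρ : M.IsRun w ρ)
    (hE : ∀ t, N ≤ t → M.SameSCC (ρ t) (ρ (t + 1)) ∧ M.IWA (M.cls (ρ t))) :
    M.InfAcc w ρ := by
  obtain ⟨N2, hN2, hrec⟩ := limit_scc hρ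
  intro N'
  set t0 := max N' (max N N2) with ht0
  obtain ⟨s, hts, hst⟩ := hrec t0 (by omega)
  -- the cycle ρ t0, ρ (t0+1), ..., ρ s = ρ t0 lies inside cls (ρ t0)
  have hcls : ∀ k, M.SameSCC (ρ t0) (ρ (t0 + k)) := by
    intro k
    induction k with
    | zero => exact sameSCC_refl _
    | succ k ih => exact sameSCC_trans ih ((hE (t0 + k) (by omega)).1)
  have hIWA : M.IWA (M.cls (ρ t0)) := (hE t0 (by omega)).2
  have hcyc : M.IsCycleIn (M.cls (ρ t0)) (s - t0) (fun k => ρ (t0 + k)) (fun k => w (t0 + k)) := by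
    refine ⟨by omega, ?_, fun j hj => ⟨hcls j, ?_⟩⟩
    · show ρ (t0 + 0) = ρ (t0 + (s - t0))
      rw [show t0 + (s - t0) = s by omega, show t0 + 0 = t0 by omega]
      exact hst.symm
    · show (ρ (t0 + j), w (t0 + j), ρ (t0 + (j + 1))) ∈ M.δ
      rw [show t0 + (j + 1) = t0 + j + 1 by omega]
      exact hρ (t0 + j)
  obtain ⟨j, hj, hjF⟩ := hIWA (s - t0) (fun k => ρ (t0 + k)) (fun k => w (t0 + k)) hcyc
  have hjF' : (ρ (t0 + j), w (t0 + j), ρ (t0 + (j + 1))) ∈ M.F := hjF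
  refine ⟨t0 + j, by omega, ?_⟩
  rw [show t0 + j + 1 = t0 + (j + 1) by omega]
  exact hjF'

/-- The trap lemma: once the breakpoint construction resets after the run `ρ` has
become trapped, `ρ` witnesses that the tracked set never empties again. -/
lemma trap {E : Set (Q × A × Q)} {B X : ℕ → Set Q} {brk : ℕ → Prop} {N : ℕ}
    (hB1 : ∀ t, brk t → M.postR E (M.subsetRun w t) (w t) \ X (t + 1) ⊆ B (t + 1))
    (hB2 : ∀ t, ¬ brk t → M.postR E (B t) (w t) \ X (t + 1) ⊆ B (t + 1))
    (hbrk : ∀ t, brk t → B t = ∅)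
    (h0 : ρ 0 ∈ M.I) (hρ : M.IsRun w ρ)
    (hE : ∀ t, N ≤ t → (ρ t, w t, ρ (t + 1)) ∈ E)
    (hX : ∀ t, N ≤ t → ρ t ∉ X t) :
    ∀ t, N ≤ t → brk t → ∀ s, t < s → ρ s ∈ B s := by
  intro t ht hbt s hs
  induction s with
  | zero => omega
  | succ s ih =>
    rcases Nat.lt_or_ge t s with h' | h'
    · have hmem := ih h'
      have hnb : ¬ brk s := by
        intro hb
        rw [hbrk s hb] at hmem
        exact hmem
      exact hB2 s hnb ⟨⟨ρ s, hmem, hE s (by omega)⟩, hX (s + 1) (by omega)⟩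
    · obtain rfl : s = t := by omega
      exact hB1 s hbt ⟨⟨ρ s, mem_subsetRun_of_run h0 hρ s, hE s ht⟩, hX (s + 1) (by omega)⟩

/-- If the tracked set is eventually always nonempty, we can extract a run that is
eventually trapped in `E`-transitions and in the tracked sets. -/
lemma escape_run {E : Set (Q × A × Q)} {B : ℕ → Set Q} {T : ℕ}
    (hEδ : E ⊆ M.δ)
    (hBS : ∀ t, T ≤ t → B t ⊆ M.subsetRun w t)
    (hne : ∀ t, T ≤ t → (B t).Nonempty)
    (hB : ∀ t, T ≤ t → B (t + 1) ⊆ M.postR E (B t) (w t)) :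
    ∃ ρ : ℕ → Q, ρ 0 ∈ M.I ∧ M.IsRun w ρ ∧
      ∀ t, T ≤ t → (ρ t, w t, ρ (t + 1)) ∈ E ∧ ρ t ∈ B t := by
  obtain ⟨σ, hσT, hσR⟩ := koenig (T := fun t => B (T + t))
    (R := fun t p q => (p, w (T + t), q) ∈ E)
    (fun t => hne (T + t) (by omega))
    (by
      intro t q hq
      have := hB (T + t) (by omega)
      rw [show T + t + 1 = T + (t + 1) by omega] at this
      obtain ⟨p, hp, hpq⟩ := this hq
      exact ⟨p, hp, hpq⟩)
  obtain ⟨ρ0, h00, h0s, h0T⟩ := exists_prefix (hBS T le_rfl (hσT 0))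
  refine ⟨fun t => if t < T then ρ0 t else σ (t - T), ?_, ?_, ?_⟩
  · rcases Nat.eq_zero_or_pos T with h | h
    · have h2 : σ 0 ∈ M.subsetRun w T := hBS T le_rfl (hσT 0)
      subst h
      simpa [BA.subsetRun] using h2
    · simpa [h] using h00
  · intro t
    rcases Nat.lt_or_ge (t + 1) T with h | h
    · simpa [h, show t < T by omega] using h0s t (by omega)
    · rcases Nat.lt_or_ge t T with h' | h'
      · obtain rfl : T = t + 1 := by omega
        simpa [h', show t + 1 - (t+1) = 0 by omega, h0T.symm,
          show ¬ (t + 1 < t + 1) by omega] using h0s t (by omega)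
      · have := hσR (t - T)
        rw [show T + (t - T) = t by omega] at this
        have h2 : t + 1 - T = t - T + 1 := by omega
        simpa [show ¬ (t < T) by omega, show ¬ (t + 1 < T) by omega, h2] using hEδ this
  · intro t ht
    have h1 := hσR (t - T)
    have h2 := hσT (t - T)
    rw [show T + (t - T) = t by omega] at h1 h2
    have h3 : t + 1 - T = t - T + 1 := by omega
    constructor
    · simpa [show ¬ (t < T) by omega, show ¬ (t + 1 < T) by omega, h3] using h1
    · simpa [show ¬ (t < T) by omega] using h2

end Main

section Esets
variable (M : BA Q A)

/-- Transitions internal to an accepting SCC. -/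
def intE : Set (Q × A × Q) :=
  {u | u ∈ M.δ ∧ M.SameSCC u.1 u.2.2 ∧ M.AccSCC (M.cls u.1)}

/-- Transitions internal to an inherently weak accepting SCC. -/
def E1 : Set (Q × A × Q) :=
  {u | u ∈ M.δ ∧ M.SameSCC u.1 u.2.2 ∧ M.AccSCC (M.cls u.1) ∧ M.IWA (M.cls u.1)}

/-- Transitions internal to a deterministic, not inherently weak, accepting SCC. -/
def E2 : Set (Q × A × Q) :=
  {u | u ∈ M.δ ∧ M.SameSCC u.1 u.2.2 ∧ M.AccSCC (M.cls u.1) ∧ M.DetSCC (M.cls u.1) ∧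
    ¬ M.IWA (M.cls u.1)}

variable {M}

lemma intE_subset : M.intE ⊆ M.δ := fun _ h => h.1
lemma E1_subset : M.E1 ⊆ M.δ := fun _ h => h.1
lemma E2_subset : M.E2 ⊆ M.δ := fun _ h => h.1

lemma E2_det {q : Q} {a : A} {r r' : Q} (h : (q, a, r) ∈ M.E2) (h' : (q, a, r') ∈ M.E2) :
    r = r' := by
  obtain ⟨hδ, hs, -, hdet, -⟩ := h
  obtain ⟨hδ', hs', -, -, -⟩ := h'
  exact hdet q (mem_cls_self q) a r r' hδ hs hδ' hs'

/-- A finite `E2`-path starting on an infinite `E2`-path coincides with it. -/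
lemma E2_path_match {w : ℕ → A} {σ τ : ℕ → Q} {t : ℕ}
    (hσ : ∀ s, (σ s, w (t + s), σ (s + 1)) ∈ M.E2) (h0 : τ 0 = σ 0) {n : ℕ}
    (hτ : ∀ k < n, (τ k, w (t + k), τ (k + 1)) ∈ M.E2) :
    ∀ k ≤ n, τ k = σ k := by
  intro k hk
  induction k with
  | zero => exact h0
  | succ k ih =>
    have hik := ih (by omega)
    have h1 := hτ k (by omega)
    rw [hik] at h1
    exact E2_det h1 (hσ k)

end Esets

section Transport
variable {σ : Type}

/-- Transport a Büchi automaton along an injection into `Fin m`. -/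
lemma transport (B0 : BA σ A) {m : ℕ} (ι : σ → Fin m) (hι : Function.Injective ι) :
    ∃ B : BA (Fin m) A, B.Lang = B0.Lang := by
  classical
  refine ⟨⟨{u | ∃ p q, ι p = u.1 ∧ ι q = u.2.2 ∧ (p, u.2.1, q) ∈ B0.δ},
          ι '' B0.I,
          {u | ∃ p q, ι p = u.1 ∧ ι q = u.2.2 ∧ (p, u.2.1, q) ∈ B0.F}⟩, ?_⟩
  ext w
  constructor
  · rintro ⟨x, hx0, hxr, hxa⟩
    choose p q hp hq hpq using hxr
    have hq' : ∀ i, q i = p (i + 1) := fun i => hι ((hq i).trans (hp (i + 1)).symm)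
    refine ⟨p, ?_, fun i => by rw [← hq' i]; exact hpq i, ?_⟩
    · obtain ⟨s, hs, hsx⟩ := hx0
      have : s = p 0 := hι (hsx.trans (hp 0).symm)
      exact this ▸ hs
    · intro N
      obtain ⟨i, hiN, hiF⟩ := hxa N
      obtain ⟨p', q', hp', hq'', hpq'⟩ := hiF
      have e1 : p' = p i := hι (hp'.trans (hp i).symm)
      have e2 : q' = p (i + 1) := hι (hq''.trans (hp (i + 1)).symm)
      refine ⟨i, hiN, ?_⟩
      rw [e1, e2] at hpq'
      exact hpq'
  · rintro ⟨s, h0, hr, ha⟩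
    refine ⟨fun i => ι (s i), ⟨s 0, h0, rfl⟩, fun i => ⟨s i, s (i + 1), rfl, rfl, hr i⟩, ?_⟩
    intro N
    obtain ⟨i, hiN, hiF⟩ := ha N
    exact ⟨i, hiN, s i, s (i + 1), rfl, rfl, hiF⟩

end Transport

section PartII
variable [Fintype Q]

open Classical in
/-- Encoding of a pair of sets as a function `Q → Fin 3`. -/
noncomputable def enc (p : Set Q × Set Q) : Q → Fin 3 :=
  fun q => if q ∈ p.2 then 2 else if q ∈ p.1 then 1 else 0

def Sof (f : Q → Fin 3) : Set Q := {q | f q ≠ 0}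
def Bof (f : Q → Fin 3) : Set Q := {q | f q = 2}

lemma Sof_enc {p : Set Q × Set Q} (h : p.2 ⊆ p.1) : Sof (enc p) = p.1 := by
  classical
  ext q
  simp only [Sof, enc, Set.mem_setOf_eq]
  by_cases h2 : q ∈ p.2
  · rw [if_pos h2]
    exact ⟨fun _ => h h2, fun _ => by decide⟩
  · rw [if_neg h2]
    by_cases h1 : q ∈ p.1
    · rw [if_pos h1]
      exact ⟨fun _ => h1, fun _ => by decide⟩
    · rw [if_neg h1]
      exact ⟨fun hc => absurd rfl hc, fun hc => absurd hc h1⟩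

lemma Bof_enc {p : Set Q × Set Q} : Bof (enc p) = p.2 := by
  classical
  ext q
  simp only [Bof, enc, Set.mem_setOf_eq]
  by_cases h2 : q ∈ p.2
  · rw [if_pos h2]
    exact ⟨fun _ => h2, fun _ => rfl⟩
  · rw [if_neg h2]
    by_cases h1 : q ∈ p.1
    · rw [if_pos h1]
      exact ⟨fun hc => absurd hc (by decide), fun hc => absurd hc h2⟩
    · rw [if_neg h1]
      exact ⟨fun hc => absurd hc (by decide), fun hc => absurd hc h2⟩

open Classical in
/-- The Miyano–Hayashi breakpoint complement of `M`. -/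
noncomputable def MII (M : BA Q A) : BA (Q → Fin 3) A where
  δ := {u | Sof u.2.2 = M.post (Sof u.1) u.2.1 ∧
        Bof u.2.2 = M.postR M.intE (if Bof u.1 = ∅ then Sof u.1 else Bof u.1) u.2.1}
  I := {f | Sof f = M.I ∧ Bof f = ∅}
  F := {u | (u ∈ {u | Sof u.2.2 = M.post (Sof u.1) u.2.1 ∧
        Bof u.2.2 = M.postR M.intE (if Bof u.1 = ∅ then Sof u.1 else Bof u.1) u.2.1}) ∧
        Bof u.1 = ∅}

variable {M : BA Q A} {w : ℕ → A}

lemma MII_S_eq {π : ℕ → (Q → Fin 3)} (h0 : π 0 ∈ (MII M).I) (hr : (MII M).IsRun w π) :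
    ∀ t, Sof (π t) = M.subsetRun w t := by
  intro t
  induction t with
  | zero => exact h0.1
  | succ t ih => rw [(hr t).1, ih]; rfl

theorem MII_correct (hF : M.F ⊆ M.δ)
    (hiwa : ∀ C : Set Q, M.IsSCC C → M.AccSCC C → M.IWA C) :
    (MII M).Lang = {w : ℕ → A | w ∉ M.Lang} := by
  classical
  ext w
  simp only [Lang, Set.mem_setOf_eq]
  constructor
  · rintro ⟨π, hπ0, hπr, hπa⟩ ⟨ρ, hρ0, hρr, hρa⟩
    obtain ⟨N, hN, -⟩ := limit_scc hρr
    -- the tail of ρ consists of intE transitions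
    have hEρ : ∀ t, N ≤ t → (ρ t, w t, ρ (t + 1)) ∈ M.intE := by
      intro t ht
      have h1 : M.SameSCC (ρ t) (ρ (t + 1)) :=
        sameSCC_trans (sameSCC_symm (hN t ht)) (hN (t + 1) (by omega))
      refine ⟨hρr t, h1, ?_⟩
      rw [← cls_eq_of_sameSCC (hN t ht)]
      obtain ⟨i, hiN, hiF⟩ := hρa N
      exact ⟨(ρ i, w i, ρ (i + 1)), hiF, hF hiF, hN i hiN, hN (i + 1) (by omega)⟩
    -- trap lemma applied to the B-component of π
    have htrap := trap (M := M) (w := w) (E := M.intE) (B := fun t => Bof (π t))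
      (X := fun _ => (∅ : Set Q)) (brk := fun t => Bof (π t) = ∅) (N := N) (ρ := ρ)
      (fun t hb => by
        have h2 : Bof (π (t + 1)) =
            M.postR M.intE (if Bof (π t) = ∅ then Sof (π t) else Bof (π t)) (w t) := (hπr t).2
        show M.postR M.intE (M.subsetRun w t) (w t) \ ∅ ⊆ Bof (π (t + 1))
        rw [Set.diff_empty, h2, if_pos hb, MII_S_eq hπ0 hπr t])
      (fun t hb => by
        have h2 : Bof (π (t + 1)) =
            M.postR M.intE (if Bof (π t) = ∅ then Sof (π t) else Bof (π t)) (w t) := (hπr t).2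
        show M.postR M.intE (Bof (π t)) (w t) \ ∅ ⊆ Bof (π (t + 1))
        rw [Set.diff_empty, h2, if_neg hb])
      (fun _ hb => hb)
      hρ0 hρr hEρ (fun t _ => Set.notMem_empty _)
    obtain ⟨t0, ht0, hbrk0⟩ := hπa N
    have h1 := htrap t0 ht0 hbrk0.2
    obtain ⟨i, hi, hiF⟩ := hπa (t0 + 1)
    have h4 : ρ i ∈ Bof (π i) := h1 i (by omega)
    have h3 : Bof (π i) = ∅ := hiF.2
    rw [h3] at h4
    exact h4
  · intro hw
    -- the canonical run
    set P : ℕ → Set Q × Set Q := fun t => Nat.rec (M.I, (∅ : Set Q))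
      (fun t p => (M.post p.1 (w t),
        M.postR M.intE (if p.2 = ∅ then p.1 else p.2) (w t))) t with hP
    have hPsucc : ∀ t, P (t + 1) = (M.post (P t).1 (w t),
        M.postR M.intE (if (P t).2 = ∅ then (P t).1 else (P t).2) (w t)) := fun t => rfl
    have hPS : ∀ t, (P t).1 = M.subsetRun w t := by
      intro t
      induction t with
      | zero => rfl
      | succ t ih => rw [hPsucc t, ih]; rfl
    have hPsub : ∀ t, (P t).2 ⊆ (P t).1 := by
      intro t
      induction t with
      | zero => exact fun q h => h.elim
      | succ t ih =>
        rw [hPsucc t]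
        rintro q ⟨p, hp, hpq⟩
        by_cases hb : (P t).2 = ∅
        · rw [if_pos hb] at hp
          exact ⟨p, hp, intE_subset hpq⟩
        · rw [if_neg hb] at hp
          exact ⟨p, ih hp, intE_subset hpq⟩
    set π : ℕ → (Q → Fin 3) := fun t => enc (P t) with hπ
    have hSof : ∀ t, Sof (π t) = (P t).1 := fun t => Sof_enc (hPsub t)
    have hBof : ∀ t, Bof (π t) = (P t).2 := fun t => Bof_enc
    have hrun : (MII M).IsRun w π := by
      intro t
      refine ⟨?_, ?_⟩
      · show Sof (π (t + 1)) = M.post (Sof (π t)) (w t)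
        rw [hSof (t + 1), hSof t, hPsucc t]
      · show Bof (π (t + 1)) =
          M.postR M.intE (if Bof (π t) = ∅ then Sof (π t) else Bof (π t)) (w t)
        rw [hBof (t + 1), hBof t, hSof t, hPsucc t]
    -- breakpoints occur infinitely often
    have hbrk : ∀ N, ∃ t ≥ N, (P t).2 = ∅ := by
      intro N
      by_contra hcon
      push_neg at hcon
      obtain ⟨ρ, hρ0, hρr, hρE⟩ := escape_run (M := M) (w := w) (E := M.intE)
        (B := fun t => (P t).2) (T := N) intE_subset
        (fun t _ => by rw [← hPS t]; exact hPsub t)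
        (fun t ht => hcon t ht)
        (fun t ht => by
          have h2 : (P (t + 1)).2 = M.postR M.intE (P t).2 (w t) := by
            rw [hPsucc t, if_neg (Set.nonempty_iff_ne_empty.mp (hcon t ht))]
          show (P (t + 1)).2 ⊆ M.postR M.intE (P t).2 (w t)
          rw [h2])
      refine hw ⟨ρ, hρ0, hρr, ?_⟩
      refine trapped_infAcc (N := N) hρr ?_
      intro t ht
      obtain ⟨hδ, hs, hacc⟩ := (hρE t ht).1
      exact ⟨hs, hiwa _ ⟨ρ t, rfl⟩ hacc⟩
    refine ⟨π, ⟨(hSof 0).trans (hPS 0), (hBof 0).trans rfl⟩, hrun, ?_⟩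
    intro N
    obtain ⟨t, ht, hbt⟩ := hbrk N
    exact ⟨t, ht, hrun t, (hBof t).trans hbt⟩

end PartII

section PartI
variable [Fintype Q]

open Classical in
/-- Transition relation of the complement construction for elevator automata.
States are `(S, B1, Sf, O)`. -/
noncomputable def stepRel (M : BA Q A) (a : A)
    (p p' : Set Q × Set Q × Set Q × Set Q) : Prop :=
  p'.1 = M.post p.1 a ∧
  p'.2.1 = M.postR M.E1 (if p.2.1 = ∅ ∧ p.2.2.2 = ∅ then p.1 else p.2.1) a ∧
  p'.2.2.2 = M.postR M.E2 (if p.2.1 = ∅ ∧ p.2.2.2 = ∅ then p.1 else p.2.2.2) a \ p'.2.2.1 ∧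
  ∀ q ∈ p.2.2.1, ∀ r, (q, a, r) ∈ M.E2 → (q, a, r) ∉ M.F ∧ r ∈ p'.2.2.1

/-- The complement of an elevator automaton. -/
noncomputable def MI (M : BA Q A) : BA (Set Q × Set Q × Set Q × Set Q) A where
  δ := {u | stepRel M u.2.1 u.1 u.2.2}
  I := {p | p.1 = M.I ∧ p.2.1 = ∅ ∧ p.2.2.2 = ∅}
  F := {u | stepRel M u.2.1 u.1 u.2.2 ∧ u.1.2.1 = ∅ ∧ u.1.2.2.2 = ∅}

variable {M : BA Q A} {w : ℕ → A}

lemma MI_S_eq {π : ℕ → Set Q × Set Q × Set Q × Set Q}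
    (h0 : π 0 ∈ (MI M).I) (hr : (MI M).IsRun w π) :
    ∀ t, (π t).1 = M.subsetRun w t := by
  intro t
  induction t with
  | zero => exact h0.1
  | succ t ih => rw [(hr t).1, ih]; rfl

/-- The tail of an accepting run of `M` consists of transitions internal to a fixed
accepting SCC. -/
lemma tail_acc {ρ : ℕ → Q} (hρr : M.IsRun w ρ) (hρa : M.InfAcc w ρ) (hF : M.F ⊆ M.δ) :
    ∃ N, ∀ t, N ≤ t → M.SameSCC (ρ t) (ρ (t + 1)) ∧ M.cls (ρ t) = M.cls (ρ N) ∧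
      M.AccSCC (M.cls (ρ N)) := by
  obtain ⟨N, hN, -⟩ := limit_scc hρr
  refine ⟨N, fun t ht => ?_⟩
  have h1 : M.SameSCC (ρ t) (ρ (t + 1)) :=
    sameSCC_trans (sameSCC_symm (hN t ht)) (hN (t + 1) (by omega))
  refine ⟨h1, (cls_eq_of_sameSCC (hN t ht)).symm, ?_⟩
  obtain ⟨i, hiN, hiF⟩ := hρa N
  exact ⟨(ρ i, w i, ρ (i + 1)), hiF, hF hiF, hN i hiN, hN (i + 1) (by omega)⟩

theorem MI_correct (hF : M.F ⊆ M.δ)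
    (hele : ∀ C : Set Q, M.IsSCC C → M.AccSCC C → M.IWA C ∨ M.DetSCC C) :
    (MI M).Lang = {w : ℕ → A | w ∉ M.Lang} := by
  classical
  ext w
  simp only [Lang, Set.mem_setOf_eq]
  constructor
  · rintro ⟨π, hπ0, hπr, hπa⟩ ⟨ρ, hρ0, hρr, hρa⟩
    obtain ⟨N, hN⟩ := tail_acc hρr hρa hF
    have hacc : M.AccSCC (M.cls (ρ N)) := (hN N le_rfl).2.2
    have hscc : M.IsSCC (M.cls (ρ N)) := ⟨ρ N, rfl⟩
    set brk : ℕ → Prop := fun t => (π t).2.1 = ∅ ∧ (π t).2.2.2 = ∅ with hbrkdef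
    have hbrkio : ∀ N', ∃ t ≥ N', brk t := by
      intro N'
      obtain ⟨i, hi, hiF⟩ := hπa N'
      exact ⟨i, hi, hiF.2⟩
    by_cases hiw : M.IWA (M.cls (ρ N))
    · -- inherently weak case: the run is eventually trapped in `E1`
      have hEρ : ∀ t, N ≤ t → (ρ t, w t, ρ (t + 1)) ∈ M.E1 := by
        intro t ht
        obtain ⟨h1, h2, -⟩ := hN t ht
        exact ⟨hρr t, h1, h2 ▸ hacc, h2 ▸ hiw⟩
      have htrap := trap (M := M) (w := w) (E := M.E1) (B := fun t => (π t).2.1)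
        (X := fun _ => (∅ : Set Q)) (brk := brk) (N := N) (ρ := ρ)
        (fun t hb => by
          have h2 := (hπr t).2.1
          show M.postR M.E1 (M.subsetRun w t) (w t) \ ∅ ⊆ (π (t + 1)).2.1
          rw [Set.diff_empty, h2, if_pos hb, MI_S_eq hπ0 hπr t])
        (fun t hb => by
          have h2 := (hπr t).2.1
          show M.postR M.E1 ((π t).2.1) (w t) \ ∅ ⊆ (π (t + 1)).2.1
          rw [Set.diff_empty, h2, if_neg hb])
        (fun t hb => hb.1)
        hρ0 hρr hEρ (fun t _ => Set.notMem_empty _)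
      obtain ⟨t0, ht0, hbrk0⟩ := hbrkio N
      obtain ⟨i, hi, hiF⟩ := hbrkio (t0 + 1)
      have h4 : ρ i ∈ (π i).2.1 := htrap t0 ht0 hbrk0 i (by omega)
      rw [hiF.1] at h4
      exact h4
    · -- deterministic case
      have hdet : M.DetSCC (M.cls (ρ N)) := (hele _ hscc hacc).resolve_left hiw
      have hEρ : ∀ t, N ≤ t → (ρ t, w t, ρ (t + 1)) ∈ M.E2 := by
        intro t ht
        obtain ⟨h1, h2, -⟩ := hN t ht
        exact ⟨hρr t, h1, h2 ▸ hacc, h2 ▸ hdet, h2 ▸ hiw⟩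
      -- the run never enters the guessed-safe set
      have hXρ : ∀ t, N ≤ t → ρ t ∉ (π t).2.2.1 := by
        intro t ht hmem
        have hstay : ∀ k, ρ (t + k) ∈ (π (t + k)).2.2.1 := by
          intro k
          induction k with
          | zero => exact hmem
          | succ k ih =>
            have h4 := ((hπr (t + k)).2.2.2 (ρ (t + k)) ih (ρ (t + k + 1))
              (hEρ (t + k) (by omega))).2
            rw [show t + (k + 1) = t + k + 1 by omega]
            exact h4
        obtain ⟨i, hi, hiF⟩ := hρa t
        have h5 := ((hπr i).2.2.2 (ρ i) (by
            have := hstay (i - t)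
            rw [show t + (i - t) = i by omega] at this
            exact this) (ρ (i + 1)) (hEρ i (by omega))).1
        exact h5 hiF
      have htrap := trap (M := M) (w := w) (E := M.E2) (B := fun t => (π t).2.2.2)
        (X := fun t => (π t).2.2.1) (brk := brk) (N := N) (ρ := ρ)
        (fun t hb => by
          have h2 := (hπr t).2.2.1
          show M.postR M.E2 (M.subsetRun w t) (w t) \ (π (t + 1)).2.2.1 ⊆ (π (t + 1)).2.2.2
          rw [h2, if_pos hb, MI_S_eq hπ0 hπr t])
        (fun t hb => by
          have h2 := (hπr t).2.2.1
          show M.postR M.E2 ((π t).2.2.2) (w t) \ (π (t + 1)).2.2.1 ⊆ (π (t + 1)).2.2.2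
          rw [h2, if_neg hb])
        (fun t hb => hb.2)
        hρ0 hρr hEρ hXρ
      obtain ⟨t0, ht0, hbrk0⟩ := hbrkio N
      obtain ⟨i, hi, hiF⟩ := hbrkio (t0 + 1)
      have h4 : ρ i ∈ (π i).2.2.2 := htrap t0 ht0 hbrk0 i (by omega)
      rw [hiF.2] at h4
      exact h4
  · intro hw
    -- the guessed-safe set: states with no accepting transition on their unique
    -- deterministic future
    set Sf : ℕ → Set Q := fun t => {q | q ∈ M.subsetRun w t ∧ ∀ n (τ : ℕ → Q), τ 0 = q →
      (∀ k < n, (τ k, w (t + k), τ (k + 1)) ∈ M.E2) →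
      ∀ j < n, (τ j, w (t + j), τ (j + 1)) ∉ M.F} with hSf
    set P : ℕ → Set Q × Set Q := fun t => Nat.rec ((∅ : Set Q), (∅ : Set Q))
      (fun t p => (M.postR M.E1 (if p.1 = ∅ ∧ p.2 = ∅ then M.subsetRun w t else p.1) (w t),
        M.postR M.E2 (if p.1 = ∅ ∧ p.2 = ∅ then M.subsetRun w t else p.2) (w t) \ Sf (t + 1))) t
      with hP
    have hPsucc : ∀ t, P (t + 1) =
        (M.postR M.E1 (if (P t).1 = ∅ ∧ (P t).2 = ∅ then M.subsetRun w t else (P t).1) (w t),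
         M.postR M.E2 (if (P t).1 = ∅ ∧ (P t).2 = ∅ then M.subsetRun w t else (P t).2) (w t) \
           Sf (t + 1)) := fun t => rfl
    have hPB1S : ∀ t, (P t).1 ⊆ M.subsetRun w t := by
      intro t
      induction t with
      | zero => exact fun q h => h.elim
      | succ t ih =>
        rw [hPsucc t]
        rintro q ⟨p, hp, hpq⟩
        by_cases hb : (P t).1 = ∅ ∧ (P t).2 = ∅
        · rw [if_pos hb] at hp
          exact ⟨p, hp, E1_subset hpq⟩
        · rw [if_neg hb] at hp
          exact ⟨p, ih hp, E1_subset hpq⟩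
    have hPOS : ∀ t, (P t).2 ⊆ M.subsetRun w t := by
      intro t
      induction t with
      | zero => exact fun q h => h.elim
      | succ t ih =>
        rw [hPsucc t]
        rintro q ⟨⟨p, hp, hpq⟩, -⟩
        by_cases hb : (P t).1 = ∅ ∧ (P t).2 = ∅
        · rw [if_pos hb] at hp
          exact ⟨p, hp, E2_subset hpq⟩
        · rw [if_neg hb] at hp
          exact ⟨p, ih hp, E2_subset hpq⟩
    set π : ℕ → Set Q × Set Q × Set Q × Set Q :=
      fun t => (M.subsetRun w t, (P t).1, Sf t, (P t).2) with hπ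
    -- membership of `Sf` propagates forward
    have hSfstep : ∀ t, ∀ q ∈ Sf t, ∀ r, (q, w t, r) ∈ M.E2 →
        (q, w t, r) ∉ M.F ∧ r ∈ Sf (t + 1) := by
      intro t q hq r hqr
      constructor
      · refine hq.2 1 (fun k => if k = 0 then q else r) rfl ?_ 0 (by omega)
        intro k hk
        obtain rfl : k = 0 := by omega
        simpa using hqr
      · refine ⟨⟨q, hq.1, E2_subset hqr⟩, ?_⟩
        intro n τ hτ0 hτE j hj hjF
        have hsteps : ∀ k < n + 1, ((fun k => if k = 0 then q else τ (k - 1)) k, w (t + k),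
            (fun k => if k = 0 then q else τ (k - 1)) (k + 1)) ∈ M.E2 := by
          intro k hk
          show (if k = 0 then q else τ (k - 1), w (t + k),
            if k + 1 = 0 then q else τ (k + 1 - 1)) ∈ M.E2
          rcases Nat.eq_zero_or_pos k with rfl | hpos
          · simpa [hτ0] using hqr
          · rw [if_neg (by omega), if_neg (by omega)]
            have h6 := hτE (k - 1) (by omega)
            rw [show t + 1 + (k - 1) = t + k by omega, show k - 1 + 1 = k by omega] at h6
            simpa [show k + 1 - 1 = k by omega] using h6
        have hq2 := hq.2 (n + 1) (fun k => if k = 0 then q else τ (k - 1)) rfl hsteps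
          (j + 1) (by omega)
        refine hq2 ?_
        show (if j + 1 = 0 then q else τ (j + 1 - 1), w (t + (j + 1)),
          if j + 1 + 1 = 0 then q else τ (j + 1 + 1 - 1)) ∈ M.F
        rw [if_neg (by omega), if_neg (by omega),
          show j + 1 - 1 = j by omega, show j + 1 + 1 - 1 = j + 1 by omega,
          show t + (j + 1) = t + 1 + j by omega]
        exact hjF
    have hrun : (MI M).IsRun w π := by
      intro t
      refine ⟨rfl, rfl, rfl, ?_⟩
      exact fun q hq r hqr => hSfstep t q hq r hqr
    -- breakpoints occur infinitely often
    have hbrk : ∀ N, ∃ t ≥ N, (P t).1 = ∅ ∧ (P t).2 = ∅ := by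
      intro N
      by_contra hcon
      have hcon' : ∀ t, N ≤ t → ¬ ((P t).1 = ∅ ∧ (P t).2 = ∅) :=
        fun t ht hc => hcon ⟨t, ht, hc⟩
      by_cases hcase : ∃ t0, N ≤ t0 ∧ (P t0).1 = ∅
      · -- B1 stays empty, O never empties: extract a deterministic trapped run
        obtain ⟨t0, ht0, hB1e⟩ := hcase
        have hB1all : ∀ t, t0 ≤ t → (P t).1 = ∅ := by
          intro t ht
          induction t with
          | zero => exact (by omega : t0 = 0) ▸ hB1e
          | succ t ih =>
            rcases Nat.lt_or_ge t0 (t + 1) with h' | h'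
            · have hie := ih (by omega)
              rw [hPsucc t]
              show M.postR M.E1 (if (P t).1 = ∅ ∧ (P t).2 = ∅ then M.subsetRun w t
                else (P t).1) (w t) = ∅
              have hnb : ¬ ((P t).1 = ∅ ∧ (P t).2 = ∅) := hcon' t (by omega)
              rw [if_neg hnb, hie]
              ext q
              simp [postR]
            · obtain rfl : t0 = t + 1 := by omega
              exact hB1e
        have hOne : ∀ t, t0 ≤ t → ((P t).2).Nonempty := by
          intro t ht
          rcases Set.eq_empty_or_nonempty (P t).2 with h | h
          · exact absurd ⟨hB1all t ht, h⟩ (hcon' t (by omega))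
          · exact h
        obtain ⟨ρ, hρ0, hρr, hρE⟩ := escape_run (M := M) (w := w) (E := M.E2)
          (B := fun t => (P t).2) (T := t0 + 1) E2_subset
          (fun t _ => hPOS t)
          (fun t ht => hOne t (by omega))
          (fun t ht => by
            have h2 : (P (t + 1)).2 ⊆ M.postR M.E2 ((P t).2) (w t) := by
              rw [hPsucc t]
              show M.postR M.E2 (if (P t).1 = ∅ ∧ (P t).2 = ∅ then M.subsetRun w t
                else (P t).2) (w t) \ Sf (t + 1) ⊆ M.postR M.E2 ((P t).2) (w t)
              rw [if_neg (hcon' t (by omega))]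
              exact Set.diff_subset
            exact h2)
        -- every tail state is outside `Sf`, hence sees a future accepting transition
        have hnotSf : ∀ t, t0 + 2 ≤ t → ρ t ∉ Sf t := by
          intro t ht hmem
          have h3 : ρ t ∈ (P t).2 := (hρE t (by omega)).2
          have h4 : (P t).2 = (P (t - 1 + 1)).2 := by rw [show t - 1 + 1 = t by omega]
          rw [h4, hPsucc (t - 1)] at h3
          have h5 := h3.2
          rw [show t - 1 + 1 = t by omega] at h5
          exact h5 hmem
        have hInfAcc : M.InfAcc w ρ := by
          intro N'
          set t := max (t0 + 2) N' with htdef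
          have hmem : ρ t ∈ M.subsetRun w t := mem_subsetRun_of_run hρ0 hρr t
          have hnot := hnotSf t (by omega)
          have hnot2 : ¬ (∀ n (τ : ℕ → Q), τ 0 = ρ t →
              (∀ k < n, (τ k, w (t + k), τ (k + 1)) ∈ M.E2) →
              ∀ j < n, (τ j, w (t + j), τ (j + 1)) ∉ M.F) :=
            fun hall => hnot ⟨hmem, hall⟩
          push_neg at hnot2
          obtain ⟨n, τ, hτ0, hτE, j, hj, hjF⟩ := hnot2
          have hσ : ∀ s, (ρ (t + s), w (t + s), ρ (t + s + 1)) ∈ M.E2 := by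
            intro s
            exact (hρE (t + s) (by omega)).1
          have hmatch := E2_path_match (σ := fun s => ρ (t + s)) (t := t) hσ hτ0
            (fun k hk => hτE k hk)
          have e1 : τ j = ρ (t + j) := hmatch j (by omega)
          have e2 : τ (j + 1) = ρ (t + j + 1) := hmatch (j + 1) (by omega)
          rw [e1, e2] at hjF
          exact ⟨t + j, by omega, by
            rw [show t + j + 1 = t + (j + 1) by omega]
            rw [show t + j + 1 = t + (j + 1) by omega] at hjF
            exact hjF⟩
        exact hw ⟨ρ, hρ0, hρr, hInfAcc⟩
      · -- B1 never empties: extract a run trapped in an inherently weak accepting SCC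
        push_neg at hcase
        obtain ⟨ρ, hρ0, hρr, hρE⟩ := escape_run (M := M) (w := w) (E := M.E1)
          (B := fun t => (P t).1) (T := N) E1_subset
          (fun t _ => hPB1S t)
          (fun t ht => hcase t ht)
          (fun t ht => by
            have h2 : (P (t + 1)).1 = M.postR M.E1 ((P t).1) (w t) := by
              rw [hPsucc t]
              show M.postR M.E1 (if (P t).1 = ∅ ∧ (P t).2 = ∅ then M.subsetRun w t
                else (P t).1) (w t) = M.postR M.E1 ((P t).1) (w t)
              rw [if_neg (hcon' t ht)]
            show (P (t + 1)).1 ⊆ M.postR M.E1 ((P t).1) (w t)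
            rw [h2])
        refine absurd ⟨ρ, hρ0, hρr, ?_⟩ hw
        refine trapped_infAcc (N := N) hρr ?_
        intro t ht
        obtain ⟨-, hs, -, hiwa⟩ := (hρE t ht).1
        exact ⟨hs, hiwa⟩
    refine ⟨π, ⟨rfl, rfl, rfl⟩, hrun, ?_⟩
    intro N'
    obtain ⟨t, ht, hb1, hb2⟩ := hbrk N'
    exact ⟨t, ht, hrun t, hb1, hb2⟩

end PartI
end BA
/-- (i) there is a universal constant `c` such that every elevator Büchi
automaton (each accepting SCC inherently weak or deterministic) has a Büchi complement
with at most `2^(c·|Q|)` states; (ii) if moreover every accepting SCC is inherently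
weak, the Miyano–Hayashi construction yields a complement with at most `3^|Q|`
states. -/
theorem elevator_complement_exponential :
    (∃ c : ℕ, ∀ (Q A : Type) [Fintype Q] [Fintype A] (M : BA Q A),
      M.F ⊆ M.δ →
      (∀ C : Set Q, M.IsSCC C → M.AccSCC C → M.IWA C ∨ M.DetSCC C) →
      ∃ (m : ℕ) (B : BA (Fin m) A),
        m ≤ 2 ^ (c * Fintype.card Q) ∧ B.Lang = {w : ℕ → A | w ∉ M.Lang}) ∧
    (∀ (Q A : Type) [Fintype Q] [Fintype A] (M : BA Q A),
      M.F ⊆ M.δ →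
      (∀ C : Set Q, M.IsSCC C → M.AccSCC C → M.IWA C) →
      ∃ (m : ℕ) (B : BA (Fin m) A),
        m ≤ 3 ^ Fintype.card Q ∧ B.Lang = {w : ℕ → A | w ∉ M.Lang}) := by
  constructor
  · refine ⟨4, ?_⟩
    intro Q A _ _ M hF hele
    classical
    obtain ⟨B, hB⟩ := BA.transport (BA.MI M)
      (Fintype.equivFin (Set Q × Set Q × Set Q × Set Q)) (Equiv.injective _)
    refine ⟨_, B, ?_, hB.trans (BA.MI_correct hF hele)⟩
    rw [Fintype.card_prod, Fintype.card_prod, Fintype.card_prod, Fintype.card_set]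
    apply le_of_eq
    rw [← pow_add, ← pow_add, ← pow_add]
    congr 1
    ring
  · intro Q A _ _ M hF hiwa
    classical
    obtain ⟨B, hB⟩ := BA.transport (BA.MII M)
      (Fintype.equivFin (Q → Fin 3)) (Equiv.injective _)
    refine ⟨_, B, ?_, hB.trans (BA.MII_correct hF hiwa)⟩
    rw [Fintype.card_fun]
    simp
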